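/- Let n ≥ 4 and let S = L_{B₆}(n). Then in the free abelian group ℤ[BP] on the set of bipartitions, π_S( Σ_{r=0}^{n−4} (−1)^{r+n} A( (n−r−4).2^r1^{n−r−3} ) ) = (−1)^n (n−3).1^{n−3} + ∅.2^{n−3}. -/

import Mathlib

open scoped Classical

noncomputable section

/-- A partition: an antitone, eventually zero sequence of natural numbers.
`parts k` is the `(k+1)`-st part `λ_{k+1}`. -/
structure Partition' where
  parts : ℕ → ℕ
  antitone' : Antitone parts
  exists_zero : ∃ N, parts N = 0

namespace Partition'

lemma sorted_getD_antitone {l : List ℕ} (h : l.Pairwise (· ≥ ·)) :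
    Antitone (fun k => l.getD k 0) := by
  intro i j hij
  simp only
  rcases lt_or_ge j l.length with hj | hj
  · have hi : i < l.length := lt_of_le_of_lt hij hj
    rw [List.getD_eq_getElem l 0 hj, List.getD_eq_getElem l 0 hi]
    rcases eq_or_lt_of_le hij with rfl | hlt
    · exact le_rfl
    · exact List.pairwise_iff_getElem.mp h i j hi hj hlt
  · rw [List.getD_eq_default l 0 hj]
    exact Nat.zero_le _

/-- The partition whose multiset of (nonzero) parts is the multiset of nonzero
elements of `m`. -/
def ofMul (m : Multiset ℕ) : Partition' where
  parts := fun k => ((m.sort (· ≤ ·)).reverse).getD k 0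
  antitone' := by
    apply sorted_getD_antitone
    rw [List.pairwise_reverse]
    exact Multiset.pairwise_sort m (· ≤ ·)
  exists_zero := ⟨((m.sort (· ≤ ·)).reverse).length, List.getD_eq_default _ _ le_rfl⟩

/-- The size `|λ|` of a partition: the sum of its parts. -/
def size (p : Partition') : ℕ := ∑ i ∈ Finset.range (Nat.find p.exists_zero), p.parts i

lemma finite_gt (p : Partition') (k : ℕ) : {i : ℕ | k < p.parts i}.Finite := by
  obtain ⟨N, hN⟩ := p.exists_zero
  apply (Set.finite_Iio N).subset
  intro i hi
  simp only [Set.mem_setOf_eq] at hi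
  by_contra hc
  simp only [Set.mem_Iio, not_lt] at hc
  have := p.antitone' hc
  omega

/-- The conjugate (transpose) partition. -/
def conj (p : Partition') : Partition' where
  parts := fun k => {i : ℕ | k < p.parts i}.ncard
  antitone' := fun a b hab =>
    Set.ncard_le_ncard (fun i hi => lt_of_le_of_lt hab hi) (p.finite_gt a)
  exists_zero := by
    refine ⟨p.parts 0, ?_⟩
    have h : {i : ℕ | p.parts 0 < p.parts i} = ∅ := by
      ext i
      simp only [Set.mem_setOf_eq, Set.mem_empty_iff_false, iff_false, not_lt]
      exact p.antitone' (Nat.zero_le i)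
    show {i : ℕ | p.parts 0 < p.parts i}.ncard = 0
    rw [h, Set.ncard_empty]

/-- The 180°-rotation of the complement of `p` inside the rectangle with
`rows` rows of length `c`: the partition `(c - p_rows, c - p_{rows-1}, …, c - p₁)`. -/
def rotCompl (c rows : ℕ) (p : Partition') : Partition' where
  parts := fun k => if k < rows then c - p.parts (rows - 1 - k) else 0
  antitone' := by
    intro a b hab
    by_cases hb : b < rows
    · have ha : a < rows := lt_of_le_of_lt hab hb
      simp only [if_pos hb, if_pos ha]
      exact Nat.sub_le_sub_left (p.antitone' (by omega)) c
    · simp only [if_neg hb]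
      exact Nat.zero_le _
  exists_zero := ⟨rows, by simp⟩

end Partition'

/-- A bipartition: a pair of partitions. -/
abbrev Bipartition := Partition' × Partition'

/-- The size of a bipartition. -/
def Bipartition.size (l : Bipartition) : ℕ := l.1.size + l.2.size

/-- The bipartition whose components have parts the multisets `a` and `b`. -/
def bip (a b : Multiset ℕ) : Bipartition := (Partition'.ofMul a, Partition'.ofMul b)

/-- The multiset of parts of the partition `a 1^b` (one part `a`, then `b` parts `1`). -/
def hook (a b : ℕ) : Multiset ℕ := a ::ₘ Multiset.replicate b 1

/-- The charged β-set of a partition, as a sequence: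
`betaSet p s i = λ_{i+1} + s - (i+1) + 1`. -/
def betaSet (p : Partition') (s : ℤ) (i : ℕ) : ℤ := (p.parts i : ℤ) + s - i

/-- The charged symbol of a bipartition with charge `σ`, as a pair of subsets of `ℤ`. -/
def symbolOf (l : Bipartition) (σ : ℤ × ℤ) : Set ℤ × Set ℤ :=
  (Set.range (betaSet l.1 σ.1), Set.range (betaSet l.2 σ.2))

/-- The charge `σ_t`. -/
def sigmaT (t : ℕ) : ℤ × ℤ :=
  if Even t then ((t : ℤ), -1 - (t : ℤ)) else (-1 - (t : ℤ), (t : ℤ))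

/-- The trivial symbol `({0,-1,-2,…},{-1,-2,-3,…})`, the symbol of the empty
bipartition with charge `σ₀ = (0,-1)`. -/
def trivialSymbol : Set ℤ × Set ℤ := ({z : ℤ | z ≤ 0}, {z : ℤ | z ≤ -1})

/-- Removing one `n`-co-hook from the symbol `Λ`, yielding `Λ'`: remove `x+n` from one
row, adjoin `x` to the other row, and exchange the two rows. -/
def CohookStep (n : ℕ) (Λ Λ' : Set ℤ × Set ℤ) : Prop :=
  (∃ x : ℤ, x + n ∈ Λ.1 ∧ x ∉ Λ.2 ∧ Λ' = (Λ.2 ∪ {x}, Λ.1 \ {x + n})) ∨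
  (∃ x : ℤ, x + n ∈ Λ.2 ∧ x ∉ Λ.1 ∧ Λ' = (Λ.2 \ {x + n}, Λ.1 ∪ {x}))

/-- `C` is the `n`-co-core of `Λ`: it is obtained from `Λ` by recursively removing
`n`-co-hooks, and no further `n`-co-hook can be removed. -/
def IsCocore (n : ℕ) (Λ C : Set ℤ × Set ℤ) : Prop :=
  Relation.ReflTransGen (CohookStep n) Λ C ∧ ∀ C', ¬ CohookStep n C C'

/-- Number of entries of the charged β-set of `p` that are `≥ α` (with multiplicity). -/
def betaCountGE (p : Partition') (s α : ℤ) : ℕ := Nat.card {i : ℕ // α ≤ betaSet p s i}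

/-- Number of entries `≥ α`, with multiplicity, of the multiset union of the two rows
of the symbol of `l` with charge `σ`. -/
def symCountGE (l : Bipartition) (σ : ℤ × ℤ) (α : ℤ) : ℕ :=
  betaCountGE l.1 σ.1 α + betaCountGE l.2 σ.2 α

/-- The composition `ϖ_Λ` of the symbol of `l` with charge `σ`: `comp l σ k` is the
`(k+1)`-st largest entry (with multiplicity) of the multiset union of the two rows. -/
def comp (l : Bipartition) (σ : ℤ × ℤ) (k : ℕ) : ℤ :=
  sSup {z : ℤ | k + 1 ≤ symCountGE l σ z}

/-- All partial sums of the composition of the symbol `(l,σ)` are bounded by those of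
`(m,τ)`. -/
def DomLE (l : Bipartition) (σ : ℤ × ℤ) (m : Bipartition) (τ : ℤ × ℤ) : Prop :=
  ∀ j : ℕ, ∑ k ∈ Finset.range j, comp l σ k ≤ ∑ k ∈ Finset.range j, comp m τ k

/-- Strict dominance `Λ ⊲ Λ'` of symbols: the compositions differ and all partial sums
of the first are bounded by those of the second. -/
def DomLT (l : Bipartition) (σ : ℤ × ℤ) (m : Bipartition) (τ : ℤ × ℤ) : Prop :=
  comp l σ ≠ comp m τ ∧ DomLE l σ m τ

/-- A box `(x, y, j)` (0-indexed row `x`, 0-indexed column `y`, component `j`: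
`j = 0` is the first component, `j = 1` the second). -/
abbrev Box := ℕ × ℕ × Fin 2

/-- The component of a bipartition selected by `j : Fin 2`. -/
def Bipartition.partsOf (l : Bipartition) (j : Fin 2) : Partition' := if j = 0 then l.1 else l.2

/-- Membership of a box in the Young diagram of a bipartition. -/
def MemY (l : Bipartition) (b : Box) : Prop := b.2.1 < (l.partsOf b.2.2).parts b.1

/-- The entry of the charge `σ` corresponding to component `j`. -/
def chargeOf (σ : ℤ × ℤ) (j : Fin 2) : ℤ := if j = 0 then σ.1 else σ.2

/-- The charged content `co^σ(b) = y - x + σ_j` of a box. -/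
def content (σ : ℤ × ℤ) (b : Box) : ℤ := (b.2.1 : ℤ) - (b.1 : ℤ) + chargeOf σ b.2.2

/-- `j(b) ∈ {1,2}`: the component of a box, numbered 1 or 2. -/
def jval (b : Box) : ℕ := (b.2.2 : ℕ) + 1

/-- The counting function of the Dunkl–Griffeth order. -/
def dgCount (l : Bipartition) (s : ℤ × ℤ) (d : ℕ) (α : ℝ) (j : ℕ) : ℕ :=
  Nat.card {b : Box // MemY l b ∧
    (α < (content s b : ℝ) - (jval b : ℝ) * (d : ℝ) / 2 ∨
      ((content s b : ℝ) - (jval b : ℝ) * (d : ℝ) / 2 = α ∧ jval b ≤ j))}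

/-- The Dunkl–Griffeth order `λ ⪯_s μ` (with respect to `d`). -/
def DGLE (l m : Bipartition) (s : ℤ × ℤ) (d : ℕ) : Prop :=
  ∀ (α : ℝ), ∀ j ∈ ({1, 2} : Set ℕ), dgCount l s d α j ≤ dgCount m s d α j

/-- A box of the extended Young diagram: rows are infinite to the left, so the column
coordinate is an integer.  `(x, y, j)` is the box in (0-indexed) row `x`, with integer
column coordinate `y` (`y = 0` is the first column), in component `j`. -/
abbrev ExtBox := ℕ × ℤ × Fin 2

/-- Membership in the extended Young diagram of a bipartition. -/
def MemExtY (l : Bipartition) (b : ExtBox) : Prop :=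
  b.2.1 < ((l.partsOf b.2.2).parts b.1 : ℤ)

/-- The charged content of an extended box. -/
def contentExt (σ : ℤ × ℤ) (b : ExtBox) : ℤ := b.2.1 - (b.1 : ℤ) + chargeOf σ b.2.2

/-- `b` is a removable box of the bipartition `l`. -/
def Removable (l : Bipartition) (b : Box) : Prop :=
  (l.partsOf b.2.2).parts b.1 = b.2.1 + 1 ∧ (l.partsOf b.2.2).parts (b.1 + 1) ≤ b.2.1

/-- `b` is an addable box of the bipartition `l`. -/
def Addable (l : Bipartition) (b : Box) : Prop :=
  (l.partsOf b.2.2).parts b.1 = b.2.1 ∧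
    (b.1 = 0 ∨ b.2.1 + 1 ≤ (l.partsOf b.2.2).parts (b.1 - 1))

/-- The order in which boxes are listed in the `i`-word: increasing charged content,
a component-2 box preceding a component-1 box of equal charged content. -/
def BoxLT (σ : ℤ × ℤ) (b b' : Box) : Prop :=
  content σ b < content σ b' ∨
    (content σ b = content σ b' ∧ b.2.2 = 1 ∧ b'.2.2 = 0)

/-- `L` is the list of boxes underlying the `i`-word of `(l, σ)` with respect to `d`:
it lists, in increasing order, exactly the addable and removable boxes of `l` whose
charged content is congruent to `i` modulo `d`. -/
def IsIWord (l : Bipartition) (σ : ℤ × ℤ) (d : ℕ) (i : ZMod d) (L : List Box) : Prop :=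
  L.Pairwise (BoxLT σ) ∧
    ∀ b : Box, b ∈ L ↔ ((Addable l b ∨ Removable l b) ∧ ((content σ b : ZMod d) = i))

/-- The sign of a box in the `i`-word: `true` (`+`) for addable, `false` (`−`) for
removable boxes. -/
def signOf (l : Bipartition) (b : Box) : Bool := if Addable l b then true else false

/-- One reduction step on words: delete an adjacent pair `−+`. -/
def RedStep (w w' : List Bool) : Prop :=
  ∃ u v : List Bool, w = u ++ false :: true :: v ∧ w' = u ++ v

/-- `ẽ_i l = 0`: the reduced `i`-word of `(l, σ)` contains no `−`, i.e. the `i`-word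
reduces to a word consisting only of `+`'s. -/
def AnnihilatedE (l : Bipartition) (σ : ℤ × ℤ) (d : ℕ) (i : ZMod d) : Prop :=
  ∃ L : List Box, IsIWord l σ d i L ∧
    ∃ a : ℕ, Relation.ReflTransGen RedStep (L.map (signOf l)) (List.replicate a true)

/-- `q` is obtained from the partition `p` by adding one box. -/
def PCovers (p q : Partition') : Prop :=
  ∃ x : ℕ, q.parts x = p.parts x + 1 ∧ ∀ y : ℕ, y ≠ x → q.parts y = p.parts y

/-- `m` is obtained from the bipartition `l` by adding one box to its Young diagram. -/
def BipCovers (l m : Bipartition) : Prop :=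
  (PCovers l.1 m.1 ∧ m.2 = l.2) ∨ (m.1 = l.1 ∧ PCovers l.2 m.2)

/-- `A(l) = Σ_μ μ`, the sum over all bipartitions obtained from `l` by adding one box,
as an element of the group of `ℤ`-valued functions on bipartitions. -/
def addB (l : Bipartition) : Bipartition → ℤ := fun m => if BipCovers l m then 1 else 0

/-- The projection `π_S` onto the span of the bipartitions lying in `S`. -/
def projS (S : Set Bipartition) (f : Bipartition → ℤ) : Bipartition → ℤ :=
  fun m => if m ∈ S then f m else 0

/-- The basis element of `ℤ[BP]` corresponding to a bipartition. -/
def deltaB (l : Bipartition) : Bipartition → ℤ := fun m => if m = l then 1 else 0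

/-- The bipartitions of `2n` labelling the principal-series unipotent characters in
the principal `Φ_{2n}`-block. -/
def PS (n : ℕ) : Set Bipartition :=
  {l | (∃ i j : ℕ, 0 < i ∧ i < n ∧ j ≤ n ∧
          l = bip (hook (n - i) j) (hook (n - j + 1) (i - 1))) ∨
       (∃ j : ℕ, j < 2 * n ∧ l = bip (hook (2 * n - j) j) 0) ∨
       (∃ i : ℕ, 0 < i ∧ i ≤ 2 * n ∧ l = bip 0 (hook (2 * n - i + 1) (i - 1)))}

/-- The bipartitions of `2n-2` labelling the `B₂`-series unipotent characters in the
principal `Φ_{2n}`-block: `2^i 1^{j-i-1} . (n-i-1)(n-j)` for `0 ≤ i < j ≤ n`. -/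
def LB2 (n : ℕ) : Set Bipartition :=
  {l | ∃ i j : ℕ, i < j ∧ j ≤ n ∧
        l = bip (Multiset.replicate i 2 + Multiset.replicate (j - i - 1) 1)
                {n - i - 1, n - j}}

/-- The bipartitions of `2n-6` labelling the `B₆`-series unipotent characters in the
principal `Φ_{2n}`-block: `(n-i-2)(n-j-1) . 2^{i-1} 1^{j-i-1}` for `0 < i < j < n`. -/
def LB6 (n : ℕ) : Set Bipartition :=
  {l | ∃ i j : ℕ, 0 < i ∧ i < j ∧ j < n ∧
        l = bip {n - i - 2, n - j - 1}
                (Multiset.replicate (i - 1) 2 + Multiset.replicate (j - i - 1) 1)}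

end


/-! Let `μ_r = (n-r-3).2^r1^{n-r-3}` (`lb6Hook n r`). A bipartition obtained from
`λ_r = (n-r-4).2^r1^{n-r-3}` by adding a box shares one component with `λ_r`, and inside
`L_{B₆}(n)` either component of `λ_r` pins down `i` and `j`: the elements of `L_{B₆}(n)` so
obtained are exactly `μ_r` and `μ_{r+1}`. The alternating sum of the `μ_r + μ_{r+1}` then
telescopes to `(-1)^n μ_0 + μ_{n-3}`. -/

namespace Partition'

theorem ext {p q : Partition'} (h : p.parts = q.parts) : p = q := by
  cases p; cases q; cases h; rfl

theorem ofMul_parts_eq_getD {m : Multiset ℕ} {l : List ℕ} (hl : l.Pairwise (· ≥ ·))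
    (hm : (l : Multiset ℕ) = m) (k : ℕ) : (ofMul m).parts k = l.getD k 0 := by
  have hsort : m.sort (· ≤ ·) = l.reverse := by
    refine List.Perm.eq_of_pairwise' (Multiset.pairwise_sort _ _) (List.pairwise_reverse.2 hl) ?_
    rw [← Multiset.coe_eq_coe, Multiset.sort_eq, ← hm, Multiset.coe_reverse]
  change ((m.sort (· ≤ ·)).reverse).getD k 0 = _
  rw [hsort, List.reverse_reverse]

theorem ofMul_cons_zero (m : Multiset ℕ) : ofMul (0 ::ₘ m) = ofMul m := by
  set l := (m.sort (· ≤ ·)).reverse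
  have hl : l.Pairwise (· ≥ ·) := List.pairwise_reverse.2 (Multiset.pairwise_sort m _)
  have hlm : (l : Multiset ℕ) = m := by rw [Multiset.coe_reverse, Multiset.sort_eq]
  refine ext (funext fun k => ?_)
  rw [ofMul_parts_eq_getD hl hlm, ofMul_parts_eq_getD (l := l ++ [0]) ?_ ?_]
  · rcases lt_or_ge k l.length with hk | hk
    · exact List.getD_append _ _ _ _ hk
    · rw [List.getD_append_right _ _ _ _ hk, List.getD_eq_default _ _ hk]
      rcases k - l.length with _ | _ <;> rfl
  · refine List.pairwise_append.2 ⟨hl, by simp, fun a _ b hb => ?_⟩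
    rw [List.mem_singleton.1 hb]
    exact Nat.zero_le a
  · rw [← Multiset.coe_add, hlm, Multiset.coe_singleton, add_comm, Multiset.singleton_add]

theorem ofMul_replicate_add_replicate_parts {a b : ℕ} (hba : b ≤ a) (r s k : ℕ) :
    (ofMul (Multiset.replicate r a + Multiset.replicate s b)).parts k
      = if k < r then a else if k < r + s then b else 0 := by
  rw [ofMul_parts_eq_getD (l := List.replicate r a ++ List.replicate s b)]
  · rcases lt_or_ge k r with h | h
    · rw [List.getD_append _ _ _ _ (by simpa using h)]
      simp [h]
    rw [List.getD_append_right _ _ _ _ (by simpa using h), List.length_replicate]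
    rcases lt_or_ge k (r + s) with h' | h'
    · rw [List.getD_eq_getElem _ _ (by simp; omega), List.getElem_replicate, if_neg (by omega),
        if_pos h']
    · rw [List.getD_eq_default _ _ (by simp; omega), if_neg (by omega), if_neg (by omega)]
  · refine List.pairwise_append.2 ⟨List.pairwise_replicate.2 (Or.inr le_rfl),
      List.pairwise_replicate.2 (Or.inr le_rfl), fun x hx y hy => ?_⟩
    rw [List.eq_of_mem_replicate hx, List.eq_of_mem_replicate hy]
    exact hba
  · rfl

theorem ofMul_singleton_parts (a k : ℕ) :
    (ofMul {a}).parts k = if k = 0 then a else 0 := by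
  have h := ofMul_replicate_add_replicate_parts (le_refl a) 1 0 k
  simp only [Multiset.replicate_one, Multiset.replicate_zero, add_zero] at h
  rw [h]
  split_ifs <;> omega

theorem ofMul_pair_parts {a b : ℕ} (hba : b ≤ a) (k : ℕ) :
    (ofMul {a, b}).parts k = if k = 0 then a else if k = 1 then b else 0 := by
  have h := ofMul_replicate_add_replicate_parts hba 1 1 k
  rw [Multiset.replicate_one, Multiset.replicate_one, Multiset.singleton_add] at h
  rw [Multiset.insert_eq_cons, h]
  split_ifs <;> omega

theorem ofMul_two_one_injective {r s r' s' : ℕ}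
    (h : ofMul (Multiset.replicate r 2 + Multiset.replicate s 1)
      = ofMul (Multiset.replicate r' 2 + Multiset.replicate s' 1)) : r = r' ∧ s = s' := by
  have hk (k : ℕ) : (if k < r then 2 else if k < r + s then 1 else 0)
      = if k < r' then 2 else if k < r' + s' then 1 else 0 := by
    simpa only [ofMul_replicate_add_replicate_parts (show 1 ≤ 2 by norm_num)]
      using congrArg (fun p => p.parts k) h
  have hr : r = r' := by
    have h₁ := hk r
    have h₂ := hk r'
    split_ifs at h₁ h₂ <;> omega
  subst hr
  have h₃ := hk (r + s)
  have h₄ := hk (r + s')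
  refine ⟨rfl, ?_⟩
  split_ifs at h₃ h₄ <;> omega

theorem eq_of_ofMul_pair_eq_singleton {a b c : ℕ} (hba : b ≤ a)
    (h : ofMul {a, b} = ofMul {c}) : a = c ∧ b = 0 := by
  have hk (k : ℕ) := congrArg (fun p => p.parts k) h
  simp only [ofMul_pair_parts hba, ofMul_singleton_parts] at hk
  exact ⟨by simpa using hk 0, by simpa using hk 1⟩

theorem pcovers_ofMul_singleton_succ (a : ℕ) : PCovers (ofMul {a}) (ofMul {a + 1}) :=
  ⟨0, by simp [ofMul_singleton_parts], fun y hy => by simp [ofMul_singleton_parts, hy]⟩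

theorem pcovers_ofMul_two_one (r s : ℕ) :
    PCovers (ofMul (Multiset.replicate r 2 + Multiset.replicate (s + 1) 1))
      (ofMul (Multiset.replicate (r + 1) 2 + Multiset.replicate s 1)) := by
  refine ⟨r, ?_, fun y hy => ?_⟩ <;>
  · simp only [ofMul_replicate_add_replicate_parts (show 1 ≤ 2 by norm_num)]
    split_ifs <;> omega

end Partition'

open Partition'

theorem bip_cons_zero_left (a b : Multiset ℕ) : bip (0 ::ₘ a) b = bip a b := by
  rw [bip, ofMul_cons_zero, bip]

theorem projS_sum_zsmul {ι : Type*} (S : Set Bipartition) (s : Finset ι) (c : ι → ℤ)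
    (f : ι → Bipartition → ℤ) :
    projS S (∑ i ∈ s, c i • f i) = ∑ i ∈ s, c i • projS S (f i) := by
  funext m
  simp only [projS, Finset.sum_apply, Pi.smul_apply]
  split_ifs <;> simp

theorem projS_addB_eq_deltaB_add_deltaB {S : Set Bipartition} {l x y : Bipartition}
    (hxy : x ≠ y) (h : ∀ m, m ∈ S ∧ BipCovers l m ↔ m = x ∨ m = y) :
    projS S (addB l) = deltaB x + deltaB y := by
  funext m
  simp only [projS, addB, deltaB, Pi.add_apply]
  rw [← ite_and, if_congr (h m) rfl rfl]
  by_cases hx : m = x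
  · simp [hx, hxy]
  · simp [hx]

theorem Finset.sum_range_neg_one_pow_smul_add {G : Type*} [AddCommGroup G] (f : ℕ → G)
    (N k : ℕ) :
    ∑ r ∈ Finset.range N, (-1 : ℤ) ^ (r + k) • (f r + f (r + 1))
      = (-1 : ℤ) ^ k • f 0 - (-1 : ℤ) ^ (N + k) • f N := by
  have hterm (r : ℕ) : (-1 : ℤ) ^ (r + k) • (f r + f (r + 1))
      = (-1 : ℤ) ^ (r + k) • f r - (-1 : ℤ) ^ (r + 1 + k) • f (r + 1) := by
    rw [smul_add, show r + 1 + k = r + k + 1 by omega, pow_succ, mul_neg_one, neg_smul,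
      sub_neg_eq_add]
  simp only [hterm]
  simpa only [zero_add] using Finset.sum_range_sub' (fun r => (-1 : ℤ) ^ (r + k) • f r) N

/-- The element of `LB6 n` with `i = r + 1` and `j = n - 1`. -/
def lb6Hook (n r : ℕ) : Bipartition :=
  bip {n - r - 3} (Multiset.replicate r 2 + Multiset.replicate (n - r - 3) 1)

theorem lb6Hook_eq {n r : ℕ} (hr : r + 3 ≤ n) :
    lb6Hook n r = bip {n - (r + 1) - 2, n - (n - 1) - 1}
      (Multiset.replicate (r + 1 - 1) 2 + Multiset.replicate (n - 1 - (r + 1) - 1) 1) := by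
  rw [lb6Hook, show n - (n - 1) - 1 = 0 by omega, Multiset.pair_comm, Multiset.insert_eq_cons,
    bip_cons_zero_left, show n - (r + 1) - 2 = n - r - 3 by omega, Nat.add_sub_cancel,
    show n - 1 - (r + 1) - 1 = n - r - 3 by omega]

theorem lb6Hook_mem_LB6 {n r : ℕ} (hr : r + 3 ≤ n) : lb6Hook n r ∈ LB6 n :=
  ⟨r + 1, n - 1, by omega, by omega, by omega, lb6Hook_eq hr⟩

theorem lb6Hook_succ {n r : ℕ} (hr : r + 4 ≤ n) :
    lb6Hook n (r + 1)
      = bip {n - r - 4} (Multiset.replicate (r + 1) 2 + Multiset.replicate (n - r - 4) 1) := by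
  rw [lb6Hook, show n - (r + 1) - 3 = n - r - 4 by omega]

theorem eq_lb6Hook_of_mem_LB6_of_snd_eq {n r : ℕ} {m : Bipartition} (hm : m ∈ LB6 n)
    (h : m.2 = ofMul (Multiset.replicate r 2 + Multiset.replicate (n - r - 3) 1)) :
    m = lb6Hook n r := by
  obtain ⟨i, j, hi, hij, hjn, rfl⟩ := hm
  obtain ⟨hr, hs⟩ := ofMul_two_one_injective h
  obtain rfl : i = r + 1 := by omega
  obtain rfl : j = n - 1 := by omega
  exact (lb6Hook_eq (by omega)).symm

theorem eq_lb6Hook_succ_of_mem_LB6_of_fst_eq {n r : ℕ} {m : Bipartition} (hr : r + 4 ≤ n)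
    (hm : m ∈ LB6 n) (h : m.1 = ofMul {n - r - 4}) : m = lb6Hook n (r + 1) := by
  obtain ⟨i, j, hi, hij, hjn, rfl⟩ := hm
  obtain ⟨hi', hj⟩ := eq_of_ofMul_pair_eq_singleton (by omega) h
  obtain rfl : i = r + 1 + 1 := by omega
  obtain rfl : j = n - 1 := by omega
  exact (lb6Hook_eq (by omega)).symm

theorem projS_LB6_addB {n r : ℕ} (hr : r + 4 ≤ n) :
    projS (LB6 n) (addB (bip {n - r - 4}
        (Multiset.replicate r 2 + Multiset.replicate (n - r - 3) 1)))
      = deltaB (lb6Hook n r) + deltaB (lb6Hook n (r + 1)) := by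
  have hsucc : n - r - 3 = n - r - 4 + 1 := by omega
  refine projS_addB_eq_deltaB_add_deltaB (fun h => ?_) fun m => ⟨?_, ?_⟩
  · have h₂ := congrArg Prod.snd h
    rw [lb6Hook, lb6Hook] at h₂
    exact absurd (ofMul_two_one_injective h₂).1 (by omega)
  · rintro ⟨hm, ⟨-, h₂⟩ | ⟨h₁, -⟩⟩
    · exact Or.inl (eq_lb6Hook_of_mem_LB6_of_snd_eq hm h₂)
    · exact Or.inr (eq_lb6Hook_succ_of_mem_LB6_of_fst_eq hr hm h₁)
  · rintro (rfl | rfl)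
    · refine ⟨lb6Hook_mem_LB6 (by omega), Or.inl ⟨?_, rfl⟩⟩
      rw [lb6Hook, hsucc]
      exact pcovers_ofMul_singleton_succ _
    · refine ⟨lb6Hook_mem_LB6 (by omega), Or.inr ⟨rfl, ?_⟩⟩
      rw [lb6Hook_succ hr, hsucc]
      exact pcovers_ofMul_two_one _ _

/-- `π_S(Σ_{r=0}^{n-4} (-1)^{r+n} A((n-r-4).2^r1^{n-r-3}))
  = (-1)^n (n-3).1^{n-3} + ∅.2^{n-3}` for `S = L_{B₆}(n)`. -/
theorem decomposition_numbers_stmt16 (n : ℕ) (hn : 4 ≤ n) :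
    projS (LB6 n)
        (∑ r ∈ Finset.range (n - 3),
          ((-1 : ℤ) ^ (r + n)) •
            addB (bip {n - r - 4}
              (Multiset.replicate r 2 + Multiset.replicate (n - r - 3) 1)))
      = ((-1 : ℤ) ^ n) • deltaB (bip {n - 3} (Multiset.replicate (n - 3) 1))
        + deltaB (bip 0 (Multiset.replicate (n - 3) 2)) := by
  have hfirst : lb6Hook n 0 = bip {n - 3} (Multiset.replicate (n - 3) 1) := by
    simp [lb6Hook]
  have hlast : lb6Hook n (n - 3) = bip 0 (Multiset.replicate (n - 3) 2) := by
    rw [lb6Hook, show n - (n - 3) - 3 = 0 by omega, Multiset.replicate_zero, add_zero,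
      ← Multiset.cons_zero, bip_cons_zero_left]
  have hodd : Odd (n - 3 + n) := ⟨n - 2, by omega⟩
  rw [projS_sum_zsmul, Finset.sum_congr rfl fun r hr =>
      congrArg _ (projS_LB6_addB (by rw [Finset.mem_range] at hr; omega)),
    Finset.sum_range_neg_one_pow_smul_add (fun r => deltaB (lb6Hook n r)), hodd.neg_one_pow,
    hfirst, hlast, neg_one_smul, sub_neg_eq_add]
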